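/- Let m ∈ ℕ and let e_1, …, e_m be the standard orthonormal basis of ℝ^m. Write c_i = e_i∧ − ι_{e_i} and ĉ_i = e_i∧ + ι_{e_i} for the Clifford operators on the exterior algebra Λ(ℝ^m), let ε be the parity involution of Λ(ℝ^m) (the algebra automorphism induced by v ↦ −v), and define the supertrace of a linear endomorphism A of Λ(ℝ^m) by str(A) = trace(ε ∘ A). For subsets I, I' ⊆ {1, …, m}, let c(e^I) denote the composition of the c_i for i ∈ I taken in increasing order of indices, and similarly ĉ(e^{I'}). Then str(c(e^I) ∘ ĉ(e^{I'})) = (−1)^{m(m+1)/2} · 2^m if I = I' = {1, …, m}, and str(c(e^I) ∘ ĉ(e^{I'})) = 0 otherwise. -/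

import Mathlib

/-!
The operators `c_i = e_i∧ − ι_{e_i}` and `ĉ_i = e_i∧ + ι_{e_i}` satisfy the Clifford relations
`c_i c_j + c_j c_i = −2δ_ij`, `ĉ_i ĉ_j + ĉ_j ĉ_i = 2δ_ij`, `c_i ĉ_j + ĉ_j c_i = 0`, and all of them
anticommute with `ε`. Write `X = c(e^I) ĉ(e^{I'})`. If `|I| + |I'|` is odd, `ε` anticommutes with
`εX`; if it is even and some `i ∉ I` (or `i ∉ I'`), the invertible `c_i` (or `ĉ_i`) anticommutes
with `εX`. Either way `tr (εX) = tr (g (εX) g⁻¹) = −tr (εX)`, so `str X = 0`.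

For `I = I' = {1, …, m}`, moving each `ĉ_i` to the left past the `c_j` gives
`X = (−1)^{m(m−1)/2} ∏ c_i ĉ_i`. Each `c_i ĉ_i` commutes with `e_j∧` for `j ≠ i` and anticommutes
with `e_i∧`, so `ε ∏ c_i ĉ_i` commutes with all left multiplications and is therefore right
multiplication by its value `(−1)^m` at `1`. Hence `εX = (−1)^{m(m+1)/2}`, and its trace on the
`2^m`-dimensional space `Λ(ℝ^m)` is the claim.
-/

noncomputable section

variable (m : ℕ)

/-- The standard basis vectors of `ℝ^m`. -/
def stdVec (i : Fin m) : EuclideanSpace ℝ (Fin m) := EuclideanSpace.single i 1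

/-- Left exterior multiplication on `Λ(ℝ^m)`. -/
def wedgeMul (v : EuclideanSpace ℝ (Fin m)) :
    Module.End ℝ (ExteriorAlgebra ℝ (EuclideanSpace ℝ (Fin m))) :=
  LinearMap.mulLeft ℝ (ExteriorAlgebra.ι ℝ v)

/-- Interior multiplication (contraction) with `v`, via the inner product. -/
def interiorMul (v : EuclideanSpace ℝ (Fin m)) :
    Module.End ℝ (ExteriorAlgebra ℝ (EuclideanSpace ℝ (Fin m))) :=
  CliffordAlgebra.contractLeft (Q := (0 : QuadraticForm ℝ (EuclideanSpace ℝ (Fin m))))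
    ((innerSL ℝ v).toLinearMap)

/-- The Clifford operator `c_i = e_i∧ − ι_{e_i}`. -/
def cOp (i : Fin m) : Module.End ℝ (ExteriorAlgebra ℝ (EuclideanSpace ℝ (Fin m))) :=
  wedgeMul m (stdVec m i) - interiorMul m (stdVec m i)

/-- The Clifford operator `ĉ_i = e_i∧ + ι_{e_i}`. -/
def cHatOp (i : Fin m) : Module.End ℝ (ExteriorAlgebra ℝ (EuclideanSpace ℝ (Fin m))) :=
  wedgeMul m (stdVec m i) + interiorMul m (stdVec m i)

/-- `c(e^I)`: the composition of the `c_i`, `i ∈ I`, in increasing order of indices. -/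
def cMonomial (I : Finset (Fin m)) :
    Module.End ℝ (ExteriorAlgebra ℝ (EuclideanSpace ℝ (Fin m))) :=
  ((I.sort (· ≤ ·)).map (cOp m)).prod

/-- `ĉ(e^{I'})`: the composition of the `ĉ_i`, `i ∈ I'`, in increasing order of indices. -/
def cHatMonomial (I : Finset (Fin m)) :
    Module.End ℝ (ExteriorAlgebra ℝ (EuclideanSpace ℝ (Fin m))) :=
  ((I.sort (· ≤ ·)).map (cHatOp m)).prod

/-- The parity involution `ε` of `Λ(ℝ^m)`: the algebra automorphism induced by `v ↦ -v`. -/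
def parityInvolution :
    Module.End ℝ (ExteriorAlgebra ℝ (EuclideanSpace ℝ (Fin m))) :=
  (CliffordAlgebra.involute
      (Q := (0 : QuadraticForm ℝ (EuclideanSpace ℝ (Fin m))))).toLinearMap

/-- The supertrace `str A = trace (ε ∘ A)`. -/
def str (A : Module.End ℝ (ExteriorAlgebra ℝ (EuclideanSpace ℝ (Fin m)))) : ℝ :=
  LinearMap.trace ℝ _ (parityInvolution m ∘ₗ A)

section AnticommutingProducts

variable {R : Type*} [Ring R]

theorem isUnit_of_mul_self_eq_one {g : R} (h : g * g = 1) : IsUnit g := ⟨⟨g, g, h, h⟩, rfl⟩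

theorem isUnit_of_mul_self_eq_neg_one {g : R} (h : g * g = -1) : IsUnit g :=
  ⟨⟨g, -g, by rw [mul_neg, h, neg_neg], by rw [neg_mul, h, neg_neg]⟩, rfl⟩

theorem commute_mul_of_anticomm {g a b : R} (ha : g * a = -(a * g)) (hb : g * b = -(b * g)) :
    Commute g (a * b) := by
  rw [Commute, SemiconjBy, ← mul_assoc, ha, neg_mul, mul_assoc, hb, mul_neg, neg_neg, mul_assoc]

theorem mul_list_prod_of_forall_anticomm {g : R} {l : List R}
    (h : ∀ a ∈ l, g * a = -(a * g)) : g * l.prod = (-1) ^ l.length * (l.prod * g) := by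
  induction l with
  | nil => simp
  | cons a t ih =>
    simp only [List.forall_mem_cons] at h
    rw [List.prod_cons, ← mul_assoc, h.1, neg_mul, mul_assoc, ih h.2]
    simp [pow_succ, mul_assoc, ((Commute.neg_one_left _).pow_left _).left_comm]

theorem mul_list_prod_map_eq_neg_one_pow_count {ι : Type*} [DecidableEq ι] {g : R} {f : ι → R}
    {j : ι} (hj : g * f j = -(f j * g)) (hi : ∀ i ≠ j, g * f i = f i * g) (l : List ι) :
    g * (l.map f).prod = (-1) ^ l.count j * ((l.map f).prod * g) := by
  induction l with
  | nil => simp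
  | cons a t ih =>
    rw [List.map_cons, List.prod_cons, ← mul_assoc, List.count_cons]
    by_cases ha : a = j
    · subst ha
      rw [hj, neg_mul, mul_assoc, ih]
      simp [pow_succ, mul_assoc, ((Commute.neg_one_left _).pow_left _).left_comm]
    · rw [hi a ha, mul_assoc, ih]
      simp [ha, mul_assoc, ((Commute.neg_one_left _).pow_left _).left_comm]

theorem list_prod_map_mul_list_prod_map_of_anticomm {ι : Type*} {f g : ι → R}
    (h : ∀ i j, g i * f j = -(f j * g i)) (l : List ι) :
    (l.map f).prod * (l.map g).prod
      = (-1) ^ l.length.choose 2 * (l.map fun i => f i * g i).prod := by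
  induction l with
  | nil => simp
  | cons a t ih =>
    set Pf := (t.map f).prod
    have hmove : Pf * g a = (-1) ^ t.length * (g a * Pf) := by
      rw [mul_list_prod_of_forall_anticomm, ← mul_assoc, ← pow_add, List.length_map,
        Even.neg_one_pow ⟨_, rfl⟩, one_mul]
      intro b hb
      obtain ⟨i, -, rfl⟩ := List.mem_map.mp hb
      exact h a i
    have hsign : ∀ (n : ℕ) (x : R), Commute ((-1) ^ n) x :=
      fun n x => (Commute.neg_one_left x).pow_left n
    simp only [List.map_cons, List.prod_cons, List.length_cons, Nat.choose_succ_succ',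
      Nat.choose_one_right]
    calc f a * Pf * (g a * (t.map g).prod)
        = f a * (Pf * g a) * (t.map g).prod := by simp only [mul_assoc]
      _ = (-1) ^ t.length * (f a * g a) * (Pf * (t.map g).prod) := by
        rw [hmove, ← mul_assoc (f a), ← (hsign _ _).eq]
        simp only [mul_assoc]
      _ = (-1) ^ (t.length + t.length.choose 2)
            * (f a * g a * (t.map fun i => f i * g i).prod) := by
        rw [ih, pow_add, mul_assoc, ← (hsign _ (f a * g a)).left_comm, mul_assoc,
          mul_assoc ((-1) ^ _)]

theorem LinearMap.trace_eq_zero_of_mul_eq_neg_mul {K V : Type*} [Field K] [CharZero K]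
    [AddCommGroup V] [Module K V] [FiniteDimensional K V] {g A : Module.End K V} (hg : IsUnit g)
    (h : g * A = -(A * g)) : LinearMap.trace K V A = 0 := by
  obtain ⟨u, rfl⟩ := hg
  have hconj : (u : Module.End K V) * A * ↑u⁻¹ = -A := by
    rw [h, neg_mul, mul_assoc, Units.mul_inv, mul_one]
  rw [← self_eq_neg, ← map_neg, ← hconj, LinearMap.trace_conj]

end AnticommutingProducts

theorem List.prod_map_apply_eq_neg_one_pow_smul {R M ι : Type*} [CommRing R] [AddCommGroup M]
    [Module R M] {f : ι → Module.End R M} {x : M} (h : ∀ i, f i x = -x) (l : List ι) :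
    (l.map f).prod x = (-1 : R) ^ l.length • x := by
  induction l with
  | nil => simp
  | cons a t ih => rw [List.map_cons, List.prod_cons, Module.End.mul_apply, ih, map_smul, h,
      List.length_cons, pow_succ, mul_neg_one, neg_smul, smul_neg]

namespace ExteriorAlgebra

variable {R M : Type*} [CommRing R] [AddCommGroup M] [Module R M]

instance instModuleFinite [Module.Free R M] [Module.Finite R M] :
    Module.Finite R (ExteriorAlgebra R M) :=
  letI : LinearOrder (Module.Free.ChooseBasisIndex R M) := by
    classical exact linearOrderOfSTO WellOrderingRel
  Module.Finite.of_basis (Module.Free.chooseBasis R M).ExteriorAlgebra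

theorem finrank_eq_two_pow [StrongRankCondition R] [Module.Free R M] [Module.Finite R M] :
    Module.finrank R (ExteriorAlgebra R M) = 2 ^ Module.finrank R M := by
  let : LinearOrder (Module.Free.ChooseBasisIndex R M) := by
    classical exact linearOrderOfSTO WellOrderingRel
  let b := Module.Free.chooseBasis R M
  rw [Module.finrank_eq_card_basis b.ExteriorAlgebra, Module.finrank_eq_card_basis b,
    Fintype.card_finset]

theorem map_eq_mul_map_one {κ : Type*} (b : Module.Basis κ R M)
    {T : Module.End R (ExteriorAlgebra R M)} (hT : ∀ i x, T (ι R (b i) * x) = ι R (b i) * T x)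
    (x : ExteriorAlgebra R M) :
    T x = x * T 1 := by
  have hι : ∀ v y, T (ι R v * y) = ι R v * T y := fun v y =>
    LinearMap.congr_fun (b.ext (f₁ := T ∘ₗ LinearMap.mulRight R y ∘ₗ ι R)
      (f₂ := LinearMap.mulRight R (T y) ∘ₗ ι R) fun i => hT i y) v
  have hmul : ∀ a y, T (a * y) = a * T y := by
    intro a
    induction a using ExteriorAlgebra.induction with
    | algebraMap r => intro y; rw [← Algebra.smul_def, map_smul, ← Algebra.smul_def]
    | ι v => exact hι v
    | mul a a' ha ha' => intro y; rw [mul_assoc, ha, ha', mul_assoc]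
    | add a a' ha ha' => intro y; rw [add_mul, map_add, ha, ha', add_mul]
  simpa using hmul x 1

end ExteriorAlgebra

variable {m}

open ExteriorAlgebra

theorem inner_stdVec (i j : Fin m) :
    inner ℝ (stdVec m i) (stdVec m j) = if i = j then 1 else 0 := by
  simp [stdVec, EuclideanSpace.inner_single_left]

theorem wedgeMul_anticomm (v w : EuclideanSpace ℝ (Fin m)) :
    wedgeMul m v * wedgeMul m w = -(wedgeMul m w * wedgeMul m v) :=
  LinearMap.ext fun x => by
    simp only [wedgeMul, Module.End.mul_apply, LinearMap.neg_apply, LinearMap.mulLeft_apply,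
      ← mul_assoc, ← neg_mul, eq_neg_of_add_eq_zero_left (ι_add_mul_swap v w)]

theorem interiorMul_anticomm (v w : EuclideanSpace ℝ (Fin m)) :
    interiorMul m v * interiorMul m w = -(interiorMul m w * interiorMul m v) :=
  LinearMap.ext fun x => CliffordAlgebra.contractLeft_comm _ _ x

theorem wedgeMul_mul_self (v : EuclideanSpace ℝ (Fin m)) : wedgeMul m v * wedgeMul m v = 0 :=
  LinearMap.ext fun x => by simp [wedgeMul, ← mul_assoc]

theorem interiorMul_mul_self (v : EuclideanSpace ℝ (Fin m)) :
    interiorMul m v * interiorMul m v = 0 :=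
  LinearMap.ext fun x => CliffordAlgebra.contractLeft_contractLeft _ x

theorem interiorMul_mul_wedgeMul_add (v w : EuclideanSpace ℝ (Fin m)) :
    interiorMul m v * wedgeMul m w + wedgeMul m w * interiorMul m v = inner ℝ v w • 1 :=
  LinearMap.ext fun x => by
    simp [interiorMul, wedgeMul, CliffordAlgebra.contractLeft_ι_mul]

theorem wedgeMul_add_smul_interiorMul_anticomm (s t : ℝ) (v w : EuclideanSpace ℝ (Fin m)) :
    (wedgeMul m v + s • interiorMul m v) * (wedgeMul m w + t • interiorMul m w)
      + (wedgeMul m w + t • interiorMul m w) * (wedgeMul m v + s • interiorMul m v)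
      = ((s + t) * inner ℝ v w) • 1 := by
  have hvw := interiorMul_mul_wedgeMul_add v w
  have hwv := interiorMul_mul_wedgeMul_add w v
  rw [real_inner_comm] at hwv
  simp only [add_mul, mul_add, smul_mul_assoc, mul_smul_comm]
  linear_combination (norm := module) (wedgeMul_anticomm v w) + t • hwv + s • hvw
    + (s * t) • interiorMul_anticomm v w

theorem wedgeMul_add_smul_interiorMul_mul_self (s : ℝ) (v : EuclideanSpace ℝ (Fin m)) :
    (wedgeMul m v + s • interiorMul m v) * (wedgeMul m v + s • interiorMul m v)
      = (s * inner ℝ v v) • 1 := by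
  simp only [add_mul, mul_add, smul_mul_assoc, mul_smul_comm]
  linear_combination (norm := module) wedgeMul_mul_self v + s • interiorMul_mul_wedgeMul_add v v
    + (s * s) • interiorMul_mul_self v

theorem cOp_eq (i : Fin m) :
    cOp m i = wedgeMul m (stdVec m i) + (-1 : ℝ) • interiorMul m (stdVec m i) := by
  rw [cOp]; module

theorem cHatOp_eq (i : Fin m) :
    cHatOp m i = wedgeMul m (stdVec m i) + (1 : ℝ) • interiorMul m (stdVec m i) := by
  rw [cHatOp, one_smul]

theorem cOp_mul_self (i : Fin m) : cOp m i * cOp m i = -1 := by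
  rw [cOp_eq, wedgeMul_add_smul_interiorMul_mul_self, inner_stdVec, if_pos rfl, mul_one]
  exact neg_one_smul ℝ (1 : Module.End ℝ (ExteriorAlgebra ℝ (EuclideanSpace ℝ (Fin m))))

theorem cHatOp_mul_self (i : Fin m) : cHatOp m i * cHatOp m i = 1 := by
  rw [cHatOp_eq, wedgeMul_add_smul_interiorMul_mul_self, inner_stdVec, if_pos rfl, mul_one,
    one_smul]

theorem cOp_anticomm {i j : Fin m} (h : i ≠ j) : cOp m i * cOp m j = -(cOp m j * cOp m i) := by
  refine eq_neg_of_add_eq_zero_left ?_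
  rw [cOp_eq, cOp_eq, wedgeMul_add_smul_interiorMul_anticomm, inner_stdVec, if_neg h]
  simp

theorem cHatOp_anticomm {i j : Fin m} (h : i ≠ j) :
    cHatOp m i * cHatOp m j = -(cHatOp m j * cHatOp m i) := by
  refine eq_neg_of_add_eq_zero_left ?_
  rw [cHatOp_eq, cHatOp_eq, wedgeMul_add_smul_interiorMul_anticomm, inner_stdVec, if_neg h]
  simp

theorem cOp_cHatOp_anticomm (i j : Fin m) : cOp m i * cHatOp m j = -(cHatOp m j * cOp m i) := by
  refine eq_neg_of_add_eq_zero_left ?_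
  rw [cOp_eq, cHatOp_eq, wedgeMul_add_smul_interiorMul_anticomm]
  simp

theorem cHatOp_cOp_anticomm (i j : Fin m) : cHatOp m i * cOp m j = -(cOp m j * cHatOp m i) := by
  rw [cOp_cHatOp_anticomm, neg_neg]

theorem parityInvolution_mul_self : parityInvolution m * parityInvolution m = 1 :=
  LinearMap.ext fun x => CliffordAlgebra.involute_involute x

theorem parityInvolution_anticomm_wedgeMul (v : EuclideanSpace ℝ (Fin m)) :
    parityInvolution m * wedgeMul m v = -(wedgeMul m v * parityInvolution m) :=
  LinearMap.ext fun x => by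
    simp [parityInvolution, wedgeMul]

theorem parityInvolution_anticomm_interiorMul (v : EuclideanSpace ℝ (Fin m)) :
    parityInvolution m * interiorMul m v = -(interiorMul m v * parityInvolution m) := by
  set T := parityInvolution m * interiorMul m v + interiorMul m v * parityInvolution m
  suffices T = 0 from eq_neg_of_add_eq_zero_left this
  have hT : ∀ w x, T (ι ℝ w * x) = ι ℝ w * T x := by
    intro w x
    simp only [T, parityInvolution, interiorMul, LinearMap.add_apply, Module.End.mul_apply,
      AlgHom.toLinearMap_apply, CliffordAlgebra.contractLeft_ι_mul, map_sub, map_smul, map_mul,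
      CliffordAlgebra.involute_ι, neg_mul, map_neg]
    change _ = CliffordAlgebra.ι 0 w * _
    rw [mul_add]
    abel
  refine LinearMap.ext fun x => ?_
  rw [map_eq_mul_map_one (EuclideanSpace.basisFun (Fin m) ℝ).toBasis fun j => hT _]
  simp [T, parityInvolution, interiorMul]

theorem parityInvolution_anticomm_cOp (i : Fin m) :
    parityInvolution m * cOp m i = -(cOp m i * parityInvolution m) := by
  rw [cOp, mul_sub, sub_mul, parityInvolution_anticomm_wedgeMul,
    parityInvolution_anticomm_interiorMul, neg_sub_neg, neg_sub]

theorem parityInvolution_anticomm_cHatOp (i : Fin m) :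
    parityInvolution m * cHatOp m i = -(cHatOp m i * parityInvolution m) := by
  rw [cHatOp, mul_add, add_mul, parityInvolution_anticomm_wedgeMul,
    parityInvolution_anticomm_interiorMul, neg_add]

theorem mul_cMonomial_mul_cHatMonomial
    {g : Module.End ℝ (ExteriorAlgebra ℝ (EuclideanSpace ℝ (Fin m)))} {I I' : Finset (Fin m)}
    (hc : ∀ j ∈ I, g * cOp m j = -(cOp m j * g))
    (hĉ : ∀ j ∈ I', g * cHatOp m j = -(cHatOp m j * g)) :
    g * (cMonomial m I * cHatMonomial m I')
      = (-1) ^ (I.card + I'.card) * (cMonomial m I * cHatMonomial m I' * g) := by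
  have hsorted : ∀ (f : Fin m → Module.End ℝ _) (J : Finset (Fin m)),
      (∀ j ∈ J, g * f j = -(f j * g)) →
      g * ((J.sort (· ≤ ·)).map f).prod
        = (-1) ^ J.card * (((J.sort (· ≤ ·)).map f).prod * g) := by
    intro f J hJ
    rw [mul_list_prod_of_forall_anticomm, List.length_map, Finset.length_sort]
    simpa using hJ
  rw [← mul_assoc, cMonomial, hsorted _ _ hc, mul_assoc, mul_assoc, ← cMonomial, cHatMonomial,
    hsorted _ _ hĉ, ← cHatMonomial,
    ((Commute.neg_one_right (cMonomial m I)).pow_right I'.card).left_comm, pow_add]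
  simp only [mul_assoc]

theorem str_eq_zero_of_anticomm_parityInvolution
    {A : Module.End ℝ (ExteriorAlgebra ℝ (EuclideanSpace ℝ (Fin m)))}
    (hA : parityInvolution m * A = -(A * parityInvolution m)) : str m A = 0 := by
  have hε := parityInvolution_mul_self (m := m)
  refine LinearMap.trace_eq_zero_of_mul_eq_neg_mul (isUnit_of_mul_self_eq_one hε) ?_
  rw [← Module.End.mul_eq_comp, ← mul_assoc, hε, one_mul, hA, neg_mul (A * _), neg_neg,
    mul_assoc, hε, mul_one]

theorem str_eq_zero_of_commute_of_anticomm_parityInvolution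
    {A g : Module.End ℝ (ExteriorAlgebra ℝ (EuclideanSpace ℝ (Fin m)))} (hg : IsUnit g)
    (hgε : parityInvolution m * g = -(g * parityInvolution m)) (hgA : g * A = A * g) :
    str m A = 0 := by
  refine LinearMap.trace_eq_zero_of_mul_eq_neg_mul hg ?_
  rw [← Module.End.mul_eq_comp, ← mul_assoc, ← neg_eq_iff_eq_neg.mpr hgε, neg_mul, mul_assoc,
    hgA, mul_assoc]

theorem str_cMonomial_mul_cHatMonomial_of_ne_univ {I I' : Finset (Fin m)}
    (h : ¬(I = Finset.univ ∧ I' = Finset.univ)) :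
    str m (cMonomial m I * cHatMonomial m I') = 0 := by
  rcases Nat.even_or_odd (I.card + I'.card) with heven | hodd
  · -- `α` is explicit: unification does not recover the negation of `Module.End` from
    -- a `HasDistribNeg` instance.
    have hsign :=
      heven.neg_one_pow (α := Module.End ℝ (ExteriorAlgebra ℝ (EuclideanSpace ℝ (Fin m))))
    rcases not_and_or.mp h with hI | hI'
    · obtain ⟨i, hi⟩ : ∃ i, i ∉ I := by simpa [Finset.eq_univ_iff_forall] using hI
      refine str_eq_zero_of_commute_of_anticomm_parityInvolution
        (isUnit_of_mul_self_eq_neg_one (cOp_mul_self i)) (parityInvolution_anticomm_cOp i) ?_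
      rw [mul_cMonomial_mul_cHatMonomial
        (fun j hj => cOp_anticomm (ne_of_mem_of_not_mem hj hi).symm)
        fun j _ => cOp_cHatOp_anticomm i j, hsign, one_mul]
    · obtain ⟨i, hi⟩ : ∃ i, i ∉ I' := by simpa [Finset.eq_univ_iff_forall] using hI'
      refine str_eq_zero_of_commute_of_anticomm_parityInvolution
        (isUnit_of_mul_self_eq_one (cHatOp_mul_self i)) (parityInvolution_anticomm_cHatOp i) ?_
      rw [mul_cMonomial_mul_cHatMonomial (fun j _ => cHatOp_cOp_anticomm i j)
        fun j hj => cHatOp_anticomm (ne_of_mem_of_not_mem hj hi).symm, hsign, one_mul]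
  · refine str_eq_zero_of_anticomm_parityInvolution ?_
    rw [mul_cMonomial_mul_cHatMonomial (fun j _ => parityInvolution_anticomm_cOp j)
      fun j _ => parityInvolution_anticomm_cHatOp j,
      hodd.neg_one_pow (α := Module.End ℝ (ExteriorAlgebra ℝ (EuclideanSpace ℝ (Fin m)))),
      neg_one_mul]

theorem cOp_mul_cHatOp (i : Fin m) :
    cOp m i * cHatOp m i = wedgeMul m (stdVec m i) * interiorMul m (stdVec m i)
      - interiorMul m (stdVec m i) * wedgeMul m (stdVec m i) := by
  rw [cOp, cHatOp, sub_mul, mul_add, mul_add, wedgeMul_mul_self, interiorMul_mul_self]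
  abel

theorem commute_wedgeMul_cOp_mul_cHatOp {i j : Fin m} (h : i ≠ j) :
    Commute (wedgeMul m (stdVec m j)) (cOp m i * cHatOp m i) := by
  have hwι : wedgeMul m (stdVec m j) * interiorMul m (stdVec m i)
      = -(interiorMul m (stdVec m i) * wedgeMul m (stdVec m j)) := by
    refine eq_neg_of_add_eq_zero_right ?_
    rw [interiorMul_mul_wedgeMul_add, inner_stdVec, if_neg h, zero_smul]
  rw [cOp_mul_cHatOp]
  exact (commute_mul_of_anticomm (wedgeMul_anticomm _ _) hwι).sub_right
    (commute_mul_of_anticomm hwι (wedgeMul_anticomm _ _))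

theorem wedgeMul_anticomm_cOp_mul_cHatOp (j : Fin m) :
    wedgeMul m (stdVec m j) * (cOp m j * cHatOp m j)
      = -(cOp m j * cHatOp m j * wedgeMul m (stdVec m j)) := by
  rw [cOp_mul_cHatOp, mul_sub, sub_mul, ← mul_assoc, wedgeMul_mul_self, mul_assoc, mul_assoc,
    wedgeMul_mul_self, zero_mul, mul_zero, zero_sub, sub_zero]

theorem cOp_mul_cHatOp_apply_one (i : Fin m) : (cOp m i * cHatOp m i) 1 = -1 := by
  simp [cOp_mul_cHatOp, wedgeMul, interiorMul, stdVec]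

theorem wedgeMul_anticomm_prod_cOp_mul_cHatOp (j : Fin m) :
    wedgeMul m (stdVec m j)
        * ((Finset.univ.sort (· ≤ ·)).map fun i => cOp m i * cHatOp m i).prod
      = -(((Finset.univ.sort (· ≤ ·)).map fun i => cOp m i * cHatOp m i).prod
        * wedgeMul m (stdVec m j)) := by
  have hcount : (Finset.univ.sort (· ≤ ·)).count j = 1 :=
    List.count_eq_one_of_mem (Finset.sort_nodup _ _) (by simp)
  rw [mul_list_prod_map_eq_neg_one_pow_count (f := fun i => cOp m i * cHatOp m i)
    (wedgeMul_anticomm_cOp_mul_cHatOp j) (fun i hi => (commute_wedgeMul_cOp_mul_cHatOp hi).eq),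
    hcount, pow_one, neg_one_mul (_ * wedgeMul m (stdVec m j))]

theorem parityInvolution_mul_prod_cOp_mul_cHatOp :
    parityInvolution m * ((Finset.univ.sort (· ≤ ·)).map fun i => cOp m i * cHatOp m i).prod
      = algebraMap ℝ _ ((-1) ^ m) := by
  have hcomm : ∀ j, Commute (wedgeMul m (stdVec m j)) (parityInvolution m *
      ((Finset.univ.sort (· ≤ ·)).map fun i => cOp m i * cHatOp m i).prod) := fun j =>
    commute_mul_of_anticomm (by rw [parityInvolution_anticomm_wedgeMul, neg_neg])
      (wedgeMul_anticomm_prod_cOp_mul_cHatOp j)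
  refine LinearMap.ext fun x => ?_
  have hbasis : ∀ j, (EuclideanSpace.basisFun (Fin m) ℝ).toBasis j = stdVec m j := by
    simp [stdVec]
  rw [map_eq_mul_map_one (EuclideanSpace.basisFun (Fin m) ℝ).toBasis
    (fun j y => by rw [hbasis]; exact (LinearMap.congr_fun (hcomm j).eq y).symm) x,
    Module.End.mul_apply, List.prod_map_apply_eq_neg_one_pow_smul cOp_mul_cHatOp_apply_one,
    Finset.length_sort, Finset.card_univ, Fintype.card_fin, Module.algebraMap_end_apply]
  simp [parityInvolution]

theorem cMonomial_univ_mul_cHatMonomial_univ :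
    cMonomial m Finset.univ * cHatMonomial m Finset.univ
      = (-1) ^ m.choose 2
          * ((Finset.univ.sort (· ≤ ·)).map fun i => cOp m i * cHatOp m i).prod := by
  rw [cMonomial, cHatMonomial, list_prod_map_mul_list_prod_map_of_anticomm cHatOp_cOp_anticomm,
    Finset.length_sort, Finset.card_univ, Fintype.card_fin]

theorem parityInvolution_mul_cMonomial_univ_mul_cHatMonomial_univ :
    parityInvolution m * (cMonomial m Finset.univ * cHatMonomial m Finset.univ)
      = algebraMap ℝ _ ((-1) ^ (m * (m + 1) / 2)) := by
  have hexp : m * (m + 1) / 2 = m.choose 2 + m := by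
    have h := Nat.choose_two_right (m + 1)
    rw [Nat.add_sub_cancel, Nat.choose_succ_succ', Nat.choose_one_right] at h
    rw [mul_comm, ← h, add_comm]
  rw [cMonomial_univ_mul_cHatMonomial_univ,
    ((Commute.neg_one_right (parityInvolution m)).pow_right (m.choose 2)).left_comm,
    parityInvolution_mul_prod_cOp_mul_cHatOp, hexp, pow_add, map_mul]
  simp

theorem str_cMonomial_univ_mul_cHatMonomial_univ :
    str m (cMonomial m Finset.univ * cHatMonomial m Finset.univ)
      = (-1) ^ (m * (m + 1) / 2) * 2 ^ m := by
  rw [str, ← Module.End.mul_eq_comp, parityInvolution_mul_cMonomial_univ_mul_cHatMonomial_univ,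
    Algebra.algebraMap_eq_smul_one, map_smul, LinearMap.trace_one, finrank_eq_two_pow,
    finrank_euclideanSpace_fin, smul_eq_mul, Nat.cast_pow, Nat.cast_ofNat]

/-- Proposition 2.6: the supertrace of a Clifford monomial `c(e^I) ĉ(e^{I'})` vanishes
unless `I = I' = {1, …, m}`, where it equals `(-1)^{m(m+1)/2} 2^m`. -/
theorem stmt8 (m : ℕ) (I I' : Finset (Fin m)) :
    str m (cMonomial m I * cHatMonomial m I')
      = if I = Finset.univ ∧ I' = Finset.univ
          then (-1 : ℝ) ^ (m * (m + 1) / 2) * 2 ^ m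
          else 0 := by
  split_ifs with h
  · rw [h.1, h.2, str_cMonomial_univ_mul_cHatMonomial_univ]
  · exact str_cMonomial_mul_cHatMonomial_of_ne_univ h

end
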